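/- arXiv:math/0203268 — 4 statements merged into one kernel-verified Lean document; each statement's English description precedes it below -/
import Mathlib

section
/- The standard simplex T^d = {x ∈ ℝ^d : x_i ≥ 0 for all i, and x_1 + ⋯ + x_d ≤ 1} equals the set {x ∈ ℝ^d : x_i(1 - x_i - x_{i+1} - ⋯ - x_d) ≥ 0 for all 1 ≤ i ≤ d}, so the d-simplex is described by d polynomial inequalities. -/
/-!
Write `S i = ∑_{j ≥ i} x j`. Going down from the last coordinate, suppose every later
coordinate is nonnegative and every later tail sum is at most `1`; then `S_{>i} ≤ 1`.
If `x i < 0`, the factor `1 - x i - S_{>i}` would be positive, so `x i * (1 - S i) < 0`;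
hence `x i ≥ 0`, and then either `x i = 0` and `S i = S_{>i} ≤ 1`, or `x i > 0` forces
`1 - S i ≥ 0`. At the first coordinate this is the simplex.
-/

open Finset

lemma nonneg_and_add_le_one_of_mul_nonneg {a s : ℝ} (hs : s ≤ 1)
    (h : 0 ≤ a * (1 - (a + s))) : 0 ≤ a ∧ a + s ≤ 1 := by
  have ha : 0 ≤ a := by nlinarith
  refine ⟨ha, ?_⟩
  rcases ha.eq_or_lt with rfl | ha
  · linarith
  · nlinarith

section TailSums

variable {ι : Type*} [LinearOrder ι] [LocallyFiniteOrderTop ι] {x : ι → ℝ}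

lemma Finset.sum_le_sum_Ici_min' {s : Finset ι} (hs : s.Nonempty)
    (hx : ∀ j ∈ Ici (s.min' hs), 0 ≤ x j) : ∑ j ∈ s, x j ≤ ∑ j ∈ Ici (s.min' hs), x j :=
  sum_le_sum_of_subset_of_nonneg (fun j hj ↦ mem_Ici.2 (s.min'_le j hj)) fun j hj _ ↦ hx j hj

lemma sum_Ioi_le_one_of_tails (i : ι) (htail : ∀ j, i < j → 0 ≤ x j ∧ ∑ k ∈ Ici j, x k ≤ 1) :
    ∑ j ∈ Ioi i, x j ≤ 1 := by
  rcases (Ioi i).eq_empty_or_nonempty with hempty | hne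
  · simp [hempty]
  · have hmin : i < (Ioi i).min' hne := mem_Ioi.1 ((Ioi i).min'_mem hne)
    calc ∑ j ∈ Ioi i, x j ≤ ∑ j ∈ Ici ((Ioi i).min' hne), x j :=
          sum_le_sum_Ici_min' hne fun j hj ↦ (htail j (hmin.trans_le (mem_Ici.1 hj))).1
      _ ≤ 1 := (htail _ hmin).2

lemma nonneg_and_sum_Ici_le_one [WellFoundedGT ι]
    (hx : ∀ i, 0 ≤ x i * (1 - ∑ j ∈ Ici i, x j)) (i : ι) :
    0 ≤ x i ∧ ∑ j ∈ Ici i, x j ≤ 1 := by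
  induction i using WellFoundedGT.induction with
  | _ i ih =>
    have hS : ∑ j ∈ Ioi i, x j ≤ 1 := sum_Ioi_le_one_of_tails i ih
    have hi := hx i
    rw [Ici_eq_cons_Ioi, sum_cons] at hi ⊢
    exact nonneg_and_add_le_one_of_mul_nonneg hS hi

theorem stdSimplex_eq_setOf_mul_one_sub_sum_Ici_nonneg [Fintype ι] :
    {x : ι → ℝ | (∀ i, 0 ≤ x i) ∧ ∑ i, x i ≤ 1} =
      {x : ι → ℝ | ∀ i, 0 ≤ x i * (1 - ∑ j ∈ Ici i, x j)} := by
  ext x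
  constructor
  · rintro ⟨hpos, hsum⟩ i
    exact mul_nonneg (hpos i) (sub_nonneg.2 ((sum_le_univ_sum_of_nonneg hpos).trans hsum))
  · intro hx
    have htail := nonneg_and_sum_Ici_le_one hx
    refine ⟨fun i ↦ (htail i).1, ?_⟩
    rcases (univ : Finset ι).eq_empty_or_nonempty with hempty | hne
    · simp [hempty]
    · exact (sum_le_sum_Ici_min' hne fun j _ ↦ (htail j).1).trans (htail _).2

end TailSums

theorem simplex_P_representation_general (d : ℕ) :
    {x : Fin d → ℝ | (∀ i, 0 ≤ x i) ∧ ∑ i, x i ≤ 1} =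
      {x : Fin d → ℝ | ∀ i, 0 ≤ x i * (1 - ∑ j ∈ Finset.Ici i, x j)} :=
  stdSimplex_eq_setOf_mul_one_sub_sum_Ici_nonneg

/-- The standard simplex `T^d` equals the set described by the `d` polynomial
inequalities `x_i (1 - x_i - ⋯ - x_d) ≥ 0`. -/
theorem simplex_P_representation (d : ℕ) (hd : 1 ≤ d) :
    {x : Fin d → ℝ | (∀ i, 0 ≤ x i) ∧ ∑ i, x i ≤ 1} =
      {x : Fin d → ℝ | ∀ i, 0 ≤ x i * (1 - ∑ j ∈ Finset.Ici i, x j)} :=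
  simplex_P_representation_general d
end

section
/- For any d-dimensional polytope P ⊂ ℝ^d, the minimal number m_P(P) of polynomials needed in a representation P = {x : p_1(x) ≥ 0, …, p_l(x) ≥ 0} satisfies m_P(P) ≥ d. -/
/-!
Induction on the dimension. A full-dimensional polytope `P = {x | ∀ j, 0 ≤ p j x}` has a facet:
an open piece of a hyperplane `H` that lies in `P` but not in its interior. At every point of
this piece some `p j` vanishes, so by Baire and the identity theorem one `p j` vanishes on all of
`H`. Dropping it leaves a representation of the facet polytope `P ∩ H`, of dimension `d - 1`,
by the remaining polynomials.
-/

noncomputable def mP (d : ℕ) (P : Set (Fin d → ℝ)) : ℕ :=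
  sInf {l : ℕ | ∃ p : Fin l → MvPolynomial (Fin d) ℝ,
    P = {x : Fin d → ℝ | ∀ j, 0 ≤ MvPolynomial.eval x (p j)}}

open Set Module

section Polyhedron

variable {E F : Type*} [NormedAddCommGroup E] [NormedSpace ℝ E]
  [NormedAddCommGroup F] [NormedSpace ℝ F]

def halfspaces (S : Finset ((E →L[ℝ] ℝ) × ℝ)) : Set E :=
  ⋂ h ∈ S, {x | h.1 x ≤ h.2}

def IsPolyhedron (P : Set E) : Prop :=
  ∃ S : Finset ((E →L[ℝ] ℝ) × ℝ), halfspaces S = P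

theorem convex_halfspaces (S : Finset ((E →L[ℝ] ℝ) × ℝ)) : Convex ℝ (halfspaces S) :=
  convex_iInter₂ fun h _ => convex_halfSpace_le h.1.isLinear h.2

theorem halfspaces_eq_erase_inter [DecidableEq ((E →L[ℝ] ℝ) × ℝ)]
    {S : Finset ((E →L[ℝ] ℝ) × ℝ)} {h : (E →L[ℝ] ℝ) × ℝ} (hS : h ∈ S) :
    halfspaces S = halfspaces (S.erase h) ∩ {x | h.1 x ≤ h.2} := by
  ext x
  simp only [halfspaces, mem_iInter, mem_inter_iff, mem_ofPred_eq, Finset.mem_erase]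
  exact ⟨fun hx => ⟨fun k hk => hx k hk.2, hx h hS⟩,
    fun ⟨hx, hxh⟩ k hk => if hkh : k = h then hkh ▸ hxh else hx k ⟨hkh, hk⟩⟩

theorem IsPolyhedron.preimage {P : Set E} (hP : IsPolyhedron P) (L : F →L[ℝ] E) (z : E) :
    IsPolyhedron ((fun v => z + L v) ⁻¹' P) := by
  classical
  obtain ⟨S, rfl⟩ := hP
  refine ⟨S.image fun h => (h.1.comp L, h.2 - h.1 z), ?_⟩
  ext v
  simp only [halfspaces, mem_iInter, mem_ofPred_eq, mem_preimage, Finset.mem_image,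
    forall_exists_index, and_imp, forall_apply_eq_imp_iff₂, ContinuousLinearMap.comp_apply,
    map_add]
  exact forall₂_congr fun h _ => le_sub_iff_add_le'

theorem Convex.exists_mem_interior_apply_eq {Q : Set E} (hQ : Convex ℝ Q) (ℓ : E →L[ℝ] ℝ)
    {β : ℝ} {c x : E} (hc : c ∈ interior Q) (hx : x ∈ Q) (hcβ : ℓ c ≤ β) (hβx : β < ℓ x) :
    ∃ z ∈ interior Q, ℓ z = β := by
  set t := (β - ℓ c) / (ℓ x - ℓ c)
  have hpos : 0 < ℓ x - ℓ c := by linarith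
  have ht0 : 0 ≤ t := div_nonneg (by linarith) hpos.le
  have ht1 : t < 1 := (div_lt_one hpos).2 (by linarith)
  refine ⟨(1 - t) • c + t • x,
    hQ.combo_interior_self_mem_interior hc hx (by linarith) ht0 (by ring), ?_⟩
  simp only [map_add, map_smul, smul_eq_mul, t]
  field_simp
  ring

theorem IsPolyhedron.exists_facet {P : Set E} (hP : IsPolyhedron P) (hP_ne : P ≠ univ)
    (hint : (interior P).Nonempty) :
    ∃ (ℓ : E →L[ℝ] ℝ) (β : ℝ) (U : Set E), ℓ ≠ 0 ∧ P ⊆ {x | ℓ x ≤ β} ∧ IsOpen U ∧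
      (U ∩ {x | ℓ x = β}).Nonempty ∧ U ∩ {x | ℓ x = β} ⊆ P := by
  classical
  obtain ⟨S, hSP, hSmin⟩ := wellFounded_lt.has_min {S | halfspaces S = P} hP
  obtain ⟨h, hS⟩ : S.Nonempty := by
    rw [Finset.nonempty_iff_ne_empty]
    rintro rfl
    exact hP_ne (by simpa [halfspaces] using hSP.symm)
  set Q := halfspaces (S.erase h)
  have hPQ : P = Q ∩ {x | h.1 x ≤ h.2} := hSP ▸ halfspaces_eq_erase_inter hS
  -- minimality of `S` makes the constraint `h` irredundant
  obtain ⟨x, hxQ, hxP⟩ : ∃ x ∈ Q, x ∉ P := by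
    by_contra! hQP
    exact hSmin (S.erase h) (Subset.antisymm hQP (hPQ ▸ inter_subset_left))
      (Finset.erase_ssubset hS)
  obtain ⟨c, hc⟩ := hint
  have hcQ : c ∈ interior Q := interior_mono (hPQ ▸ inter_subset_left) hc
  have hcβ : h.1 c ≤ h.2 := (hPQ ▸ interior_subset hc : c ∈ Q ∩ _).2
  have hβx : h.2 < h.1 x := not_le.1 fun hx => hxP (hPQ ▸ ⟨hxQ, hx⟩)
  obtain ⟨z, hzQ, hz⟩ := (convex_halfspaces _).exists_mem_interior_apply_eq h.1 hcQ hxQ hcβ hβx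
  refine ⟨h.1, h.2, interior Q, ?_, hPQ ▸ inter_subset_right, isOpen_interior, ⟨z, hzQ, hz⟩, ?_⟩
  · rintro hzero
    simp only [hzero, zero_apply] at hcβ hβx
    linarith
  · rintro y ⟨hyQ, hy⟩
    exact hPQ ▸ ⟨interior_subset hyQ, le_of_eq hy⟩

end Polyhedron

theorem exists_eq_zero_of_notMem_interior {X κ : Type*} [TopologicalSpace X] [Finite κ]
    {f : κ → X → ℝ} (hf : ∀ j, Continuous (f j)) {x : X} (hx : ∀ j, 0 ≤ f j x)
    (hx_int : x ∉ interior {y | ∀ j, 0 ≤ f j y}) : ∃ j, f j x = 0 := by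
  by_contra! hne
  refine hx_int (interior_maximal (t := ⋂ j, {y | 0 < f j y}) ?_ ?_ ?_)
  · exact fun y hy j => (mem_iInter.1 hy j).le
  · exact isOpen_iInter_of_finite fun j => isOpen_lt continuous_const (hf j)
  · exact mem_iInter.2 fun j => (hx j).lt_of_ne (hne j).symm

theorem setOf_forall_nonneg_eq_of_eq_zero {X κ : Type*} {f : κ → X → ℝ} {j₀ : κ}
    (hj₀ : f j₀ = 0) : {x | ∀ j, 0 ≤ f j x} = {x | ∀ j : {j // j ≠ j₀}, 0 ≤ f j x} := by
  ext x
  refine ⟨fun h j => h j, fun h j => ?_⟩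
  by_cases hj : j = j₀
  · exact hj ▸ (congrFun hj₀ x).ge
  · exact h ⟨j, hj⟩

theorem ContinuousLinearMap.interior_setOf_le {E : Type*} [NormedAddCommGroup E]
    [NormedSpace ℝ E] [CompleteSpace E] {ℓ : E →L[ℝ] ℝ} (hℓ : ℓ ≠ 0) (β : ℝ) :
    interior {x | ℓ x ≤ β} = {x | ℓ x < β} := by
  have hsurj : Function.Surjective ℓ :=
    LinearMap.surjective_iff_ne_zero.2 fun h => hℓ (ContinuousLinearMap.coe_injective h)
  have h := ℓ.interior_preimage hsurj (Iic β)
  rw [interior_Iic] at h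
  exact h

theorem exists_eq_zero_of_subset_setOf_le {E κ : Type*} [NormedAddCommGroup E]
    [NormedSpace ℝ E] [CompleteSpace E] [Finite κ] {f : κ → E → ℝ} (hf : ∀ j, Continuous (f j))
    {ℓ : E →L[ℝ] ℝ} (hℓ : ℓ ≠ 0) {β : ℝ} (hsub : {x | ∀ j, 0 ≤ f j x} ⊆ {x | ℓ x ≤ β})
    {x : E} (hx : ∀ j, 0 ≤ f j x) (hxβ : ℓ x = β) : ∃ j, f j x = 0 :=
  exists_eq_zero_of_notMem_interior hf hx fun hint =>
    (((interior_mono hsub).trans (ℓ.interior_setOf_le hℓ β).subset hint : ℓ x < β)).ne hxβ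

section Analytic

variable {E F : Type*} [NormedAddCommGroup E] [NormedSpace ℝ E] [CompleteSpace E]
  [NormedAddCommGroup F] [NormedSpace ℝ F]

theorem exists_eq_zero_of_isOpen_of_forall_exists_eq_zero {κ : Type*} [Finite κ]
    {f : κ → E → F} (hf : ∀ j, AnalyticOnNhd ℝ (f j) univ) {U : Set E} (hU : IsOpen U)
    (hU_ne : U.Nonempty) (hzero : ∀ x ∈ U, ∃ j, f j x = 0) : ∃ j, f j = 0 := by
  by_contra! hne
  -- by the identity theorem, each `f j` is nonzero on a dense open set
  have hdense : ∀ j, Dense {x | f j x ≠ 0} := fun j => by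
    refine dense_iff_inter_open.2 fun V hV ⟨v, hv⟩ => ?_
    by_contra! hVj
    refine hne j (funext fun x => (hf j).eqOn_zero_of_preconnected_of_eventuallyEq_zero
      isPreconnected_univ (mem_univ v) ?_ (mem_univ x))
    filter_upwards [hV.mem_nhds hv] with y hy
    by_contra hy0
    exact hVj.subset ⟨hy, hy0⟩
  obtain ⟨x, hx, hxU⟩ := (dense_iInter_of_isOpen (fun j => isOpen_ne_fun (hf j).continuous
    continuous_const) hdense).exists_mem_open hU hU_ne
  obtain ⟨j, hj⟩ := hzero x hxU
  exact mem_iInter.1 hx j hj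

end Analytic

theorem finrank_le_card_of_eq_setOf_nonneg {E : Type*} [NormedAddCommGroup E]
    [NormedSpace ℝ E] [FiniteDimensional ℝ E] {P : Set E} (hP : IsPolyhedron P)
    (hcomp : IsCompact P) (hint : (interior P).Nonempty) {κ : Type*} [Fintype κ]
    {f : κ → E → ℝ} (hf : ∀ j, AnalyticOnNhd ℝ (f j) univ)
    (hPf : P = {x | ∀ j, 0 ≤ f j x}) : finrank ℝ E ≤ Fintype.card κ := by
  obtain ⟨n, hn⟩ : ∃ n, finrank ℝ E = n := ⟨_, rfl⟩
  induction n generalizing E P κ with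
  | zero => exact hn ▸ Nat.zero_le _
  | succ n ih =>
  classical
  subst hPf
  have : Nontrivial E := Module.nontrivial_of_finrank_eq_succ hn
  obtain ⟨ℓ, β, U, hℓ, hPℓ, hU, ⟨z, hzU, hzβ : ℓ z = β⟩, hUP⟩ :=
    hP.exists_facet (fun h => noncompact_univ E (h ▸ hcomp)) hint
  set K := LinearMap.ker (ℓ : E →ₗ[ℝ] ℝ)
  have hK : finrank ℝ K + 1 = n + 1 := hn ▸
    Module.Dual.finrank_ker_add_one_of_ne_zero fun h => hℓ (ContinuousLinearMap.coe_injective h)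
  let g : K → E := fun v => z + K.subtypeL v
  have hgβ : ∀ v, ℓ (g v) = β := fun v => by simp [g, hzβ]
  have hg : Isometry g := Isometry.of_dist_eq fun v w => dist_add_left z v w
  have hfg : ∀ j, AnalyticOnNhd ℝ (f j ∘ g) univ := fun j v _ =>
    (hf j (g v) trivial).comp (analyticAt_const.add (K.subtypeL.analyticAt v))
  have hW : IsOpen (g ⁻¹' U) := hU.preimage hg.continuous
  have hW₀ : 0 ∈ g ⁻¹' U := by simpa [g] using hzU
  have hWP : g ⁻¹' U ⊆ g ⁻¹' {x | ∀ j, 0 ≤ f j x} := fun v hv => hUP ⟨hv, hgβ v⟩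
  obtain ⟨j₀, hj₀⟩ := exists_eq_zero_of_isOpen_of_forall_exists_eq_zero hfg hW ⟨0, hW₀⟩
    fun v hv => exists_eq_zero_of_subset_setOf_le (fun j => (hf j).continuous) hℓ hPℓ
      (hWP hv) (hgβ v)
  have := ih (f := fun j : {j // j ≠ j₀} => f j ∘ g) (hP.preimage K.subtypeL z)
    (hg.isClosedEmbedding.isCompact_preimage hcomp)
    ⟨0, interior_mono hWP (hW.interior_eq.superset hW₀)⟩ (fun j => hfg j)
    (setOf_forall_nonneg_eq_of_eq_zero (f := fun j => f j ∘ g) hj₀) (by omega)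
  rw [Fintype.card_subtype_compl, Fintype.card_subtype_eq] at this
  have : 0 < Fintype.card κ := Fintype.card_pos_iff.2 ⟨j₀⟩
  omega

theorem isPolyhedron_setOf_sum_mul_le {d m : ℕ} (a : Fin m → Fin d → ℝ) (b : Fin m → ℝ) :
    IsPolyhedron {x : Fin d → ℝ | ∀ i, ∑ j, a i j * x j ≤ b i} := by
  classical
  refine ⟨Finset.univ.image fun i => (∑ j, a i j • ContinuousLinearMap.proj j, b i), ?_⟩
  ext x
  simp [halfspaces]

/-- For every full-dimensional polytope `P ⊂ ℝ^d`, at least `d` polynomial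
inequalities are needed in any `P`-representation: `m_P(P) ≥ d`. -/
theorem mP_ge_dim (d : ℕ) (P : Set (Fin d → ℝ))
    (hpoly : ∃ (m : ℕ) (a : Fin m → Fin d → ℝ) (b : Fin m → ℝ),
      P = {x | ∀ i, ∑ j, a i j * x j ≤ b i})
    (hcomp : IsCompact P)
    (hfull : (interior P).Nonempty) :
    d ≤ mP d P := by
  obtain ⟨m, a, b, rfl⟩ := hpoly
  refine le_csInf ⟨m, fun i => .C (b i) - ∑ j, .C (a i j) * .X j, ?_⟩ ?_
  · ext x
    simp
  · rintro l ⟨p, hp⟩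
    simpa using finrank_le_card_of_eq_setOf_nonneg (isPolyhedron_setOf_sum_mul_le a b) hcomp hfull
      (fun j => AnalyticOnNhd.eval_mvPolynomial (p j)) hp
end

section
/- If P is a d-prism or a d-pyramid with basis a (d−1)-polytope Q, then m_P(P) = m_P(Q) + 1. -/
open MvPolynomial Set Filter Topology

namespace MvPolynomial

lemma IsHomogeneous.eval_smul {σ R : Type*} [CommRing R] {φ : MvPolynomial σ R} {n : ℕ}
    (hφ : φ.IsHomogeneous n) (w : R) (z : σ → R) : eval (w • z) φ = w ^ n * eval z φ := by
  simp only [eval_eq, Finset.mul_sum]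
  refine Finset.sum_congr rfl fun α hα => ?_
  simp only [Pi.smul_apply, smul_eq_mul, mul_pow, Finset.prod_mul_distrib,
    Finset.prod_pow_eq_pow_sum]
  rw [← hφ (mem_support_iff.mp hα), Finsupp.weight_apply]
  simp only [Finsupp.sum, Pi.one_apply, smul_eq_mul, mul_one]
  ring

lemma eq_zero_of_eval_eq_zero_on_open {σ : Type*} [Fintype σ] {p : MvPolynomial σ ℝ}
    {U : Set (σ → ℝ)} (hU : IsOpen U) (hne : U.Nonempty) (h : ∀ x ∈ U, eval x p = 0) :
    p = 0 := by
  obtain ⟨x₀, hx₀⟩ := hne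
  have hzero := (AnalyticOnNhd.eval_mvPolynomial p).eqOn_zero_of_preconnected_of_eventuallyEq_zero
    isPreconnected_univ (mem_univ x₀) (eventuallyEq_of_mem (hU.mem_nhds hx₀) h)
  exact funext fun x => by simpa using hzero (mem_univ x)

noncomputable def homogenize {R : Type*} [CommRing R] {d : ℕ} (E : ℕ)
    (p : MvPolynomial (Fin d) R) : MvPolynomial (Fin (d + 1)) R :=
  ∑ k ∈ Finset.range (E + 1),
    X (Fin.last d) ^ (E - k) * rename Fin.castSucc (homogeneousComponent k p)

lemma eval_homogenize {R : Type*} [CommRing R] {d E : ℕ} {p : MvPolynomial (Fin d) R}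
    (hE : p.totalDegree ≤ E) (w : R) (z : Fin d → R) :
    eval (Fin.snoc (w • z) w) (homogenize E p) = w ^ E * eval z p := by
  have hsum : ∑ k ∈ Finset.range (E + 1), homogeneousComponent k p = p := by
    rw [← Finset.sum_subset (Finset.range_subset_range.2 (Nat.succ_le_succ hE)),
      sum_homogeneousComponent]
    intro k _ hk
    exact homogeneousComponent_eq_zero k p (by simp at hk; omega)
  conv_rhs => rw [← hsum]
  rw [homogenize, map_sum, map_sum, Finset.mul_sum]
  refine Finset.sum_congr rfl fun k hk => ?_
  have hinit : (Fin.snoc (w • z) w : Fin (d + 1) → R) ∘ Fin.castSucc = w • z := by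
    ext i; simp
  rw [map_mul, map_pow, eval_X, Fin.snoc_last, eval_rename, hinit,
    (homogeneousComponent_isHomogeneous k p).eval_smul, ← mul_assoc, ← pow_add,
    Nat.sub_add_cancel (Finset.mem_range_succ_iff.1 hk)]

lemma eval_bind₁ {σ τ R : Type*} [CommRing R] (x : τ → R) (f : σ → MvPolynomial τ R)
    (q : MvPolynomial σ R) : eval x (bind₁ f q) = eval (fun i => eval x (f i)) q :=
  eval₂Hom_bind₁ (RingHom.id R) x f q

end MvPolynomial

def HasPRep (d l : ℕ) (S : Set (Fin d → ℝ)) : Prop :=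
  ∃ p : Fin l → MvPolynomial (Fin d) ℝ, S = {x | ∀ j, 0 ≤ eval x (p j)}

section HasPRep

variable {d l : ℕ} {S : Set (Fin d → ℝ)}

lemma mP_le (h : HasPRep d l S) : mP d S ≤ l := Nat.sInf_le h

lemma HasPRep.hasPRep_mP (h : HasPRep d l S) : HasPRep d (mP d S) S :=
  Nat.sInf_mem (s := {l | HasPRep d l S}) ⟨l, h⟩

lemma le_mP {n : ℕ} (h : HasPRep d l S) (hn : ∀ k, HasPRep d k S → n ≤ k) : n ≤ mP d S :=
  le_csInf ⟨l, h⟩ hn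

lemma HasPRep.inter (h : HasPRep d l S) (g : MvPolynomial (Fin d) ℝ) :
    HasPRep d (l + 1) ({x | 0 ≤ eval x g} ∩ S) := by
  obtain ⟨p, rfl⟩ := h
  exact ⟨Fin.cons g p, by ext x; simp [Fin.forall_fin_succ]⟩

lemma HasPRep.preimage {m : ℕ} {S : Set (Fin m → ℝ)} (h : HasPRep m l S)
    {F : (Fin d → ℝ) → Fin m → ℝ} (f : Fin m → MvPolynomial (Fin d) ℝ)
    (hF : ∀ x i, F x i = eval x (f i)) : HasPRep d l (F ⁻¹' S) := by
  obtain ⟨p, rfl⟩ := h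
  refine ⟨fun j => bind₁ f (p j), ?_⟩
  ext x
  simp only [mem_preimage, mem_ofPred_eq, eval_bind₁, ← funext (hF x)]

end HasPRep

lemma hasPRep_polyhedron {d m : ℕ} (a : Fin m → Fin d → ℝ) (b : Fin m → ℝ) :
    HasPRep d m {x | ∀ i, ∑ j, a i j * x j ≤ b i} :=
  ⟨fun i => C (b i) - ∑ j, C (a i j) * X j, by ext x; simp⟩

lemma exists_eval_eq_zero_of_notMem_interior {n l : ℕ} {p : Fin l → MvPolynomial (Fin n) ℝ}
    {x : Fin n → ℝ} (hx : ∀ j, 0 ≤ eval x (p j))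
    (hint : x ∉ interior {y | ∀ j, 0 ≤ eval y (p j)}) : ∃ j, eval x (p j) = 0 := by
  by_contra! hne
  refine hint (mem_interior.2 ⟨{y | ∀ j, 0 < eval y (p j)}, fun y hy j => (hy j).le, ?_,
    fun j => (hx j).lt_of_ne (hne j).symm⟩)
  simp only [ofPred_forall]
  exact isOpen_iInter_of_finite fun j => isOpen_lt continuous_const (continuous_eval _)

lemma hasPRep_of_exists_eval_eq_zero {d k : ℕ} {r : Fin (k + 1) → MvPolynomial (Fin d) ℝ}
    {U : Set (Fin d → ℝ)} (hU : IsOpen U) (hne : U.Nonempty)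
    (hzero : ∀ y ∈ U, ∃ j, eval y (r j) = 0) : HasPRep d k {y | ∀ j, 0 ≤ eval y (r j)} := by
  have hprod : ∏ j, r j = 0 := eq_zero_of_eval_eq_zero_on_open hU hne fun y hy => by
    obtain ⟨j, hj⟩ := hzero y hy
    rw [map_prod]
    exact Finset.prod_eq_zero (Finset.mem_univ j) hj
  obtain ⟨j₀, -, hj₀⟩ := Finset.prod_eq_zero_iff.1 hprod
  exact ⟨fun i => r (j₀.succAbove i), by ext y; simp [Fin.forall_iff_succAbove j₀, hj₀]⟩

lemma snoc_zero_notMem_interior {d : ℕ} {c : ℝ} (hc : c ≠ 0) {P : Set (Fin (d + 1) → ℝ)}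
    (hP : P ⊆ {x | 0 ≤ c * x (Fin.last d)}) (y : Fin d → ℝ) :
    (Fin.snoc y 0 : Fin (d + 1) → ℝ) ∉ interior P := by
  intro hy
  have hcurve : Tendsto (fun s : ℝ => (Fin.snoc y (-(c * s)) : Fin (d + 1) → ℝ)) (𝓝[>] 0)
      (𝓝 (Fin.snoc y 0)) := by
    have hcont : Continuous fun s : ℝ => (Fin.snoc y (-(c * s)) : Fin (d + 1) → ℝ) :=
      continuous_const.finSnoc (by fun_prop)
    simpa using (hcont.tendsto 0).mono_left nhdsWithin_le_nhds
  obtain ⟨s, hsP, hs⟩ :=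
    ((hcurve.eventually (mem_interior_iff_mem_nhds.1 hy)).and self_mem_nhdsWithin).exists
  have := hP hsP
  simp only [mem_ofPred_eq, Fin.snoc_last] at this
  nlinarith [mul_self_pos.2 hc, show (0 : ℝ) < s from hs]

lemma mP_add_one_le_of_hasPRep {d k : ℕ} {Q : Set (Fin d → ℝ)} (hQ : (interior Q).Nonempty) {c : ℝ}
    (hc : c ≠ 0) {P : Set (Fin (d + 1) → ℝ)} (hP : P ⊆ {x | 0 ≤ c * x (Fin.last d)})
    (hslice : ∀ y, (Fin.snoc y 0 : Fin (d + 1) → ℝ) ∈ P ↔ y ∈ Q) (hk : HasPRep (d + 1) k P) :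
    mP d Q + 1 ≤ k := by
  obtain ⟨p, rfl⟩ := hk
  cases k with
  | zero =>
    have := hP (show (Fin.snoc 0 (-c) : Fin (d + 1) → ℝ) ∈ _ from fun j => j.elim0)
    simp only [mem_ofPred_eq, Fin.snoc_last] at this
    nlinarith [mul_self_pos.2 hc]
  | succ k =>
    set r := fun j => bind₁ (Fin.snoc X 0) (p j)
    have hr : ∀ y j, eval y (r j) = eval (Fin.snoc y 0) (p j) := fun y j => by
      simp only [r, eval_bind₁]
      congr 2
      funext i
      cases i using Fin.lastCases <;> simp
    have hQr : Q = {y | ∀ j, 0 ≤ eval y (r j)} := by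
      ext y; simp [hr, ← hslice]
    have hzero : ∀ y ∈ interior Q, ∃ j, eval y (r j) = 0 := fun y hy => by
      simp only [hr]
      exact exists_eval_eq_zero_of_notMem_interior ((hslice y).2 (interior_subset hy))
        (snoc_zero_notMem_interior hc hP y)
    have := mP_le (hQr ▸ hasPRep_of_exists_eval_eq_zero isOpen_interior hQ hzero)
    omega

section Straighten

variable {d l : ℕ}

/-- Affine coordinates in which `Fin.snoc q 0 + t • v` becomes `Fin.snoc q (1 - t)`. -/
noncomputable def straighten (v x : Fin (d + 1) → ℝ) : Fin (d + 1) → ℝ :=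
  Fin.snoc (fun i => x i.castSucc - (v (Fin.last d))⁻¹ * x (Fin.last d) * v i.castSucc)
    (1 - (v (Fin.last d))⁻¹ * x (Fin.last d))

variable {v : Fin (d + 1) → ℝ}

lemma straighten_snoc_add_smul (hv : v (Fin.last d) ≠ 0) (q : Fin d → ℝ) (t : ℝ) :
    straighten v (Fin.snoc q 0 + t • v) = Fin.snoc q (1 - t) := by
  have ht : (v (Fin.last d))⁻¹ * (t * v (Fin.last d)) = t := by field_simp
  ext i
  cases i using Fin.lastCases <;> simp [straighten, ht]

lemma eq_snoc_add_smul_of_straighten_eq (hv : v (Fin.last d) ≠ 0) {x : Fin (d + 1) → ℝ}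
    {y : Fin d → ℝ} {w : ℝ} (h : straighten v x = Fin.snoc y w) :
    x = Fin.snoc y 0 + (1 - w) • v := by
  obtain ⟨rfl, rfl⟩ := Fin.snoc_inj.1 h
  ext i
  cases i using Fin.lastCases <;>
    simp only [Pi.add_apply, Pi.smul_apply, Fin.snoc_last, Fin.snoc_castSucc, smul_eq_mul,
      sub_sub_cancel, zero_add]
  · field_simp
  · ring

lemma HasPRep.preimage_straighten {S : Set (Fin (d + 1) → ℝ)} (h : HasPRep (d + 1) l S)
    (v : Fin (d + 1) → ℝ) : HasPRep (d + 1) l (straighten v ⁻¹' S) :=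
  h.preimage (Fin.snoc (fun i => X i.castSucc - C (v (Fin.last d))⁻¹ * X (Fin.last d) *
      C (v i.castSucc)) (1 - C (v (Fin.last d))⁻¹ * X (Fin.last d))) fun x i => by
    cases i using Fin.lastCases <;> simp [straighten]

end Straighten

lemma nonneg_mul_one_sub_iff {w : ℝ} : 0 ≤ w * (1 - w) ↔ w ∈ Icc 0 1 := by
  refine ⟨fun h => ⟨?_, ?_⟩, fun hw => mul_nonneg hw.1 (sub_nonneg.2 hw.2)⟩ <;> nlinarith

lemma IsCompact.exists_pos_dotProduct_self_le {d : ℕ} {Q : Set (Fin d → ℝ)} (hQ : IsCompact Q) :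
    ∃ A > 0, ∀ q ∈ Q, q ⬝ᵥ q ≤ A := by
  obtain ⟨M, hM⟩ := hQ.bddAbove_image (f := fun q => q ⬝ᵥ q) (by fun_prop)
  exact ⟨max M 1, by positivity, fun q hq => (hM ⟨q, hq, rfl⟩).trans (le_max_left _ _)⟩

section Standard

variable {d l : ℕ} {Q : Set (Fin d → ℝ)}

def stdPrism (Q : Set (Fin d → ℝ)) : Set (Fin (d + 1) → ℝ) :=
  {z | ∃ q ∈ Q, ∃ w ∈ Icc (0 : ℝ) 1, z = Fin.snoc q w}

def stdPyramid (Q : Set (Fin d → ℝ)) : Set (Fin (d + 1) → ℝ) :=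
  {z | ∃ q ∈ Q, ∃ w ∈ Icc (0 : ℝ) 1, z = Fin.snoc (w • q) w}

lemma snoc_mem_stdPrism {y : Fin d → ℝ} {w : ℝ} :
    (Fin.snoc y w : Fin (d + 1) → ℝ) ∈ stdPrism Q ↔ y ∈ Q ∧ w ∈ Icc 0 1 := by
  simp [stdPrism, Fin.snoc_inj]

lemma snoc_mem_stdPyramid {y : Fin d → ℝ} {w : ℝ} :
    (Fin.snoc y w : Fin (d + 1) → ℝ) ∈ stdPyramid Q ↔ w ∈ Icc 0 1 ∧ ∃ q ∈ Q, y = w • q := by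
  simp only [stdPyramid, mem_ofPred_eq, Fin.snoc_inj]
  exact ⟨fun ⟨q, hq, w', hw', hy, hw⟩ => hw ▸ ⟨hw', q, hq, hy⟩,
    fun ⟨hw, q, hq, hy⟩ => ⟨q, hq, w, hw, hy, rfl⟩⟩

lemma hasPRep_stdPrism (h : HasPRep d l Q) : HasPRep (d + 1) (l + 1) (stdPrism Q) := by
  convert (h.preimage (F := Fin.init) (fun i => X i.castSucc) fun x i => by simp [Fin.init]).inter
    (X (Fin.last d) * (1 - X (Fin.last d))) using 1
  ext z
  obtain ⟨y, w, rfl⟩ : ∃ y w, z = Fin.snoc y w :=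
    ⟨Fin.init z, z (Fin.last d), (Fin.snoc_init_self z).symm⟩
  simp [snoc_mem_stdPrism, nonneg_mul_one_sub_iff, and_comm]

lemma hasPRep_stdPyramid (hQc : IsCompact Q) (hQne : Q.Nonempty) (h : HasPRep d l Q) :
    HasPRep (d + 1) (l + 1) (stdPyramid Q) := by
  obtain ⟨A, hA, hQA⟩ := hQc.exists_pos_dotProduct_self_le
  obtain ⟨p, hp⟩ := h
  -- `A` bounds `q ⬝ᵥ q` on `Q`, so the first inequality holds on `stdPyramid Q`; conversely it
  -- forces `w ∈ [0, 1]`, and `y = 0` at the apex `w = 0`.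
  refine ⟨Fin.cons (C A * X (Fin.last d) * (1 - X (Fin.last d)) -
      (1 - X (Fin.last d)) ^ 2 * ∑ i : Fin d, X i.castSucc * X i.castSucc)
    fun j => homogenize ((p j).totalDegree + 1) (p j), ?_⟩
  ext z
  obtain ⟨y, w, rfl⟩ : ∃ y w, z = Fin.snoc y w :=
    ⟨Fin.init z, z (Fin.last d), (Fin.snoc_init_self z).symm⟩
  have hhom : ∀ j (q : Fin d → ℝ), eval (Fin.snoc (w • q) w)
      (homogenize ((p j).totalDegree + 1) (p j)) = w ^ ((p j).totalDegree + 1) * eval q (p j) :=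
    fun j q => eval_homogenize (Nat.le_succ _) w q
  simp only [snoc_mem_stdPyramid, mem_ofPred_eq, Fin.forall_fin_succ, Fin.cons_zero,
    Fin.cons_succ]
  rw [show eval (Fin.snoc y w) (C A * X (Fin.last d) * (1 - X (Fin.last d)) -
      (1 - X (Fin.last d)) ^ 2 * ∑ i : Fin d, X i.castSucc * X i.castSucc) =
      A * w * (1 - w) - (1 - w) ^ 2 * (y ⬝ᵥ y) by simp [dotProduct]]
  constructor
  · rintro ⟨hw, q, hq, rfl⟩
    have hww : 0 ≤ w * (1 - w) := nonneg_mul_one_sub_iff.2 hw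
    have hq0 : 0 ≤ q ⬝ᵥ q := Finset.sum_nonneg fun i _ => mul_self_nonneg (q i)
    refine ⟨?_, fun j => ?_⟩
    · rw [smul_dotProduct, dotProduct_smul, smul_smul, smul_eq_mul,
        show A * w * (1 - w) - (1 - w) ^ 2 * (w * w * (q ⬝ᵥ q)) =
          w * (1 - w) * (A - w * (1 - w) * (q ⬝ᵥ q)) by ring]
      have hle : w * (1 - w) * (q ⬝ᵥ q) ≤ q ⬝ᵥ q :=
        mul_le_of_le_one_left hq0 (by nlinarith [hw.1, hw.2])
      exact mul_nonneg hww (by linarith [hQA q hq])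
    · rw [hhom]
      exact mul_nonneg (pow_nonneg hw.1 _) ((hp ▸ hq) j)
  · rintro ⟨h₀, hj⟩
    have hy0 : 0 ≤ y ⬝ᵥ y := Finset.sum_nonneg fun i _ => mul_self_nonneg (y i)
    have hw : w ∈ Icc 0 1 := nonneg_mul_one_sub_iff.1 <|
      nonneg_of_mul_nonneg_right (by nlinarith [sq_nonneg (1 - w)]) hA
    refine ⟨hw, ?_⟩
    rcases hw.1.eq_or_lt with rfl | hw0
    · have hy : y = 0 := dotProduct_self_eq_zero.1 (by linarith)
      exact ⟨hQne.some, hQne.some_mem, by simp [hy]⟩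
    · refine ⟨w⁻¹ • y, hp ▸ fun j => ?_, (smul_inv_smul₀ hw0.ne' y).symm⟩
      have := hj j
      rw [← smul_inv_smul₀ hw0.ne' y, hhom] at this
      exact nonneg_of_mul_nonneg_right this (pow_pos hw0 _)

end Standard

section Shapes

variable {d : ℕ} {Q : Set (Fin d → ℝ)} {v : Fin (d + 1) → ℝ}

lemma prism_eq_preimage_straighten (hv : v (Fin.last d) ≠ 0) :
    {x | ∃ q ∈ Q, ∃ t ∈ Icc (0 : ℝ) 1, x = (Fin.snoc q 0 : Fin (d + 1) → ℝ) + t • v} =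
      straighten v ⁻¹' stdPrism Q := by
  ext x
  constructor
  · rintro ⟨q, hq, t, ht, rfl⟩
    rw [mem_preimage, straighten_snoc_add_smul hv, snoc_mem_stdPrism]
    exact ⟨hq, sub_nonneg.2 ht.2, sub_le_self _ ht.1⟩
  · rintro ⟨q, hq, w, hw, hx⟩
    exact ⟨q, hq, 1 - w, ⟨sub_nonneg.2 hw.2, sub_le_self _ hw.1⟩,
      eq_snoc_add_smul_of_straighten_eq hv hx⟩

lemma convexHull_eq_preimage_straighten (hQconv : Convex ℝ Q) (hQne : Q.Nonempty)
    (hv : v (Fin.last d) ≠ 0) :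
    convexHull ℝ ((fun q : Fin d → ℝ => (Fin.snoc q 0 : Fin (d + 1) → ℝ)) '' Q ∪ {v}) =
      straighten v ⁻¹' stdPyramid Q := by
  have hsnoc : IsLinearMap ℝ fun q : Fin d → ℝ => (Fin.snoc q 0 : Fin (d + 1) → ℝ) :=
    ⟨fun a b => by ext i; cases i using Fin.lastCases <;> simp,
      fun c a => by ext i; cases i using Fin.lastCases <;> simp⟩
  rw [union_singleton, convexHull_insert (hQne.image _),
    (hQconv.is_linear_image hsnoc).convexHull_eq, convexJoin_singleton_left]
  ext x
  simp only [mem_iUnion, mem_image, segment_eq_image, exists_prop]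
  have hsmul : ∀ (q : Fin d → ℝ) (w : ℝ), (1 - w) • v + w • (Fin.snoc q 0 : Fin (d + 1) → ℝ) =
      Fin.snoc (w • q) 0 + (1 - w) • v := fun q w => by
    rw [show (Fin.snoc (w • q) 0 : Fin (d + 1) → ℝ) = w • Fin.snoc q 0 from hsnoc.map_smul w q]
    exact add_comm _ _
  constructor
  · rintro ⟨_, ⟨q, hq, rfl⟩, w, hw, rfl⟩
    rw [mem_preimage, hsmul, straighten_snoc_add_smul hv, sub_sub_cancel, snoc_mem_stdPyramid]
    exact ⟨hw, q, hq, rfl⟩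
  · rintro ⟨q, hq, w, hw, hx⟩
    exact ⟨_, ⟨q, hq, rfl⟩, w, hw, by rw [hsmul, eq_snoc_add_smul_of_straighten_eq hv hx]⟩

end Shapes

lemma mP_preimage_straighten {d : ℕ} {Q : Set (Fin d → ℝ)} (hQ : (interior Q).Nonempty)
    {v : Fin (d + 1) → ℝ} (hv : v (Fin.last d) ≠ 0) {S : Set (Fin (d + 1) → ℝ)}
    (hS : HasPRep (d + 1) (mP d Q + 1) S) (hS_le : ∀ z ∈ S, z (Fin.last d) ≤ 1)
    (hslice : ∀ y, (Fin.snoc y 1 : Fin (d + 1) → ℝ) ∈ S ↔ y ∈ Q) :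
    mP (d + 1) (straighten v ⁻¹' S) = mP d Q + 1 := by
  have hP := hS.preimage_straighten v
  refine le_antisymm (mP_le hP)
    (le_mP hP fun k hk => mP_add_one_le_of_hasPRep hQ (inv_ne_zero hv) ?_ ?_ hk)
  · intro x hx
    simpa [straighten] using hS_le _ hx
  · intro y
    have hy : straighten v (Fin.snoc y 0) = Fin.snoc y 1 := by
      simpa using straighten_snoc_add_smul hv y 0
    rw [mem_preimage, hy, hslice]

/-- If `P` is a `(d+1)`-dimensional prism or pyramid over a full-dimensional
polytope `Q ⊂ ℝ^d` (embedded as `Q × {0}`, with apex/translation vector `v` outside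
the hyperplane `x_{d+1} = 0`), then `m_P(P) = m_P(Q) + 1`. -/
theorem mP_prism_pyramid (d : ℕ) (Q : Set (Fin d → ℝ))
    (hQconv : Convex ℝ Q) (hQcomp : IsCompact Q) (hQfull : (interior Q).Nonempty)
    (hQpoly : ∃ (m : ℕ) (a : Fin m → Fin d → ℝ) (b : Fin m → ℝ),
      Q = {x | ∀ i, ∑ j, a i j * x j ≤ b i})
    (v : Fin (d + 1) → ℝ) (hv : v (Fin.last d) ≠ 0)
    (P : Set (Fin (d + 1) → ℝ))
    (hP : P = convexHull ℝ (((fun q : Fin d → ℝ => (Fin.snoc q 0 : Fin (d + 1) → ℝ)) '' Q) ∪ {v})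
        ∨ P = {x | ∃ q ∈ Q, ∃ t ∈ Set.Icc (0 : ℝ) 1,
            x = (Fin.snoc q 0 : Fin (d + 1) → ℝ) + t • v}) :
    mP (d + 1) P = mP d Q + 1 := by
  have hQne : Q.Nonempty := hQfull.mono interior_subset
  have hQrep : HasPRep d (mP d Q) Q := by
    obtain ⟨m, a, b, hQ⟩ := hQpoly
    exact (hQ ▸ hasPRep_polyhedron a b).hasPRep_mP
  rcases hP with rfl | rfl
  · rw [convexHull_eq_preimage_straighten hQconv hQne hv]
    refine mP_preimage_straighten hQfull hv (hasPRep_stdPyramid hQcomp hQne hQrep) ?_ ?_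
    · rintro _ ⟨q, -, w, hw, rfl⟩
      simpa using hw.2
    · simp [snoc_mem_stdPyramid]
  · rw [prism_eq_preimage_straighten hv]
    refine mP_preimage_straighten hQfull hv (hasPRep_stdPrism hQrep) ?_ ?_
    · rintro _ ⟨q, -, w, hw, rfl⟩
      simpa using hw.2
    · simp [snoc_mem_stdPrism]
end

section
/- Let P = {x ∈ ℝ^d : ⟨a^i, x⟩ ≤ b_i, 1 ≤ i ≤ m} be a d-dimensional polytope with irredundant representation, with support function h, and containing its centroid at the origin. Define v_i(x) = (2⟨a^i,x⟩ − h(a^i) + h(−a^i)) / (h(a^i) + h(−a^i)). For ε > 0 choose an integer p > ln(m) / (2 ln(1 + 2ε/((d+1)·diam(P)))) and set p_ε(x) = (1/m) ∑_{i=1}^m v_i(x)^{2p} and K_ε = {x : p_ε(x) ≤ 1}. Then P ⊆ K_ε and the Hausdorff distance satisfies dist(P, K_ε) ≤ ε. -/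
/-!
On `P` every `vᵢ` takes values in `[-1, 1]`, so `P ⊆ K_ε`. The converse estimate rests on a point
`c ∈ P` that is deep in every direction: `⟪aⁱ, c⟫ ≤ h(aⁱ) - wᵢ / (d + 1)` with
`wᵢ = h(aⁱ) + h(-aⁱ)` the width of `P` in direction `aⁱ`. Helly's theorem provides one, since for
any `k ≤ d + 1` of the directions the average of points minimising the corresponding `⟪aⁱ, ·⟫`
has this depth. For `x ∈ K_ε` each `vᵢ(x)^(2p) ≤ m < (1 + λ)^(2p)`, `λ = 2ε / ((d + 1) diam P)`,
by the choice of `p`; hence `⟪aⁱ, x⟫ ≤ h(aⁱ) + λ wᵢ / 2`, and the homothety of ratio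
`(1 + s)⁻¹`, `s = (d + 1) λ / 2`, centred at `c` maps `x` into `P`, moving it by at most
`s · diam P = ε`.
-/

open MeasureTheory
open scoped RealInnerProductSpace

/-- The support function `h(u) = sup{⟨u,x⟩ : x ∈ P}`. -/
noncomputable def suppFn {d : ℕ} (P : Set (EuclideanSpace ℝ (Fin d)))
    (u : EuclideanSpace ℝ (Fin d)) : ℝ :=
  sSup ((fun x => (inner ℝ u x : ℝ)) '' P)

open Metric Finset Topology

section NormedSpace

variable {E : Type*} [NormedAddCommGroup E] [NormedSpace ℝ E] {P : Set E}

lemma exists_pos_add_smul_mem_and_sub_smul_mem {x : E} (hx : x ∈ interior P) (u : E) :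
    ∃ t : ℝ, 0 < t ∧ x + t • u ∈ P ∧ x - t • u ∈ P := by
  have hcont : Continuous fun t : ℝ => x + t • u := by fun_prop
  have hnhds : ∀ᶠ t : ℝ in 𝓝 0, x + t • u ∈ P := by
    refine hcont.continuousAt.preimage_mem_nhds ?_
    simpa using mem_interior_iff_mem_nhds.mp hx
  have hboth : ∀ᶠ t : ℝ in 𝓝 0, x + t • u ∈ P ∧ x - t • u ∈ P := by
    refine hnhds.and ?_
    simpa [sub_eq_add_neg] using (continuous_neg.tendsto' (0 : ℝ) 0 neg_zero).eventually hnhds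
  obtain ⟨t, hmem, ht⟩ := ((hboth.filter_mono nhdsWithin_le_nhds).and
    (self_mem_nhdsWithin (s := Set.Ioi (0 : ℝ)) (a := 0))).exists
  exact ⟨t, ht, hmem⟩

lemma diam_pos_of_interior_nonempty [Nontrivial E] (hb : Bornology.IsBounded P)
    (hint : (interior P).Nonempty) : 0 < diam P := by
  obtain ⟨x, hx⟩ := hint
  obtain ⟨u, hu⟩ := exists_ne (0 : E)
  obtain ⟨t, ht, hxt, -⟩ := exists_pos_add_smul_mem_and_sub_smul_mem hx u
  refine diam_pos ⟨x + t • u, hxt, x, interior_subset hx, ?_⟩ hb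
  simpa using smul_ne_zero ht.ne' hu

lemma infDist_le_mul_diam_of_lineMap_mem (hb : Bornology.IsBounded P) {c x : E} (hc : c ∈ P)
    {s : ℝ} (hs : 0 ≤ s) (hy : AffineMap.lineMap c x (1 + s)⁻¹ ∈ P) :
    infDist x P ≤ s * diam P := by
  set t : ℝ := (1 + s)⁻¹
  have ht : 0 < t := by positivity
  have hst : 1 - t = s * t := by
    have : (1 + s) * t = 1 := mul_inv_cancel₀ (by positivity)
    linarith
  calc infDist x P ≤ dist x (AffineMap.lineMap c x t) := infDist_le_dist_of_mem hy
    _ = s * dist (AffineMap.lineMap c x t) c := by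
      rw [dist_comm, dist_lineMap_right, dist_lineMap_left, Real.norm_eq_abs, Real.norm_eq_abs,
        abs_of_pos ht, hst, abs_of_nonneg (by positivity)]
      ring
    _ ≤ s * diam P := by gcongr; exact dist_le_diam_of_mem hb hy hc

end NormedSpace

section SupportFunction

variable {d : ℕ} {P : Set (EuclideanSpace ℝ (Fin d))}

noncomputable def supportWidth (P : Set (EuclideanSpace ℝ (Fin d)))
    (u : EuclideanSpace ℝ (Fin d)) : ℝ :=
  suppFn P u + suppFn P (-u)

/-- The affine function of `⟪u, x⟫` mapping the supporting slab
`-suppFn P (-u) ≤ ⟪u, x⟫ ≤ suppFn P u` onto `[-1, 1]`; it is `0` when the slab is degenerate. -/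
noncomputable def slabCoord (P : Set (EuclideanSpace ℝ (Fin d)))
    (u x : EuclideanSpace ℝ (Fin d)) : ℝ :=
  (2 * ⟪u, x⟫ - suppFn P u + suppFn P (-u)) / supportWidth P u

lemma inner_le_suppFn (hc : IsCompact P) (u : EuclideanSpace ℝ (Fin d))
    {x : EuclideanSpace ℝ (Fin d)} (hx : x ∈ P) : ⟪u, x⟫ ≤ suppFn P u :=
  le_csSup (hc.image (continuous_const.inner continuous_id)).bddAbove ⟨x, hx, rfl⟩

lemma neg_suppFn_neg_le_inner (hc : IsCompact P) (u : EuclideanSpace ℝ (Fin d))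
    {x : EuclideanSpace ℝ (Fin d)} (hx : x ∈ P) : -suppFn P (-u) ≤ ⟪u, x⟫ := by
  have := inner_le_suppFn hc (-u) hx
  rw [inner_neg_left] at this
  linarith

lemma suppFn_le {u : EuclideanSpace ℝ (Fin d)} {r : ℝ} (hne : P.Nonempty)
    (h : ∀ x ∈ P, ⟪u, x⟫ ≤ r) : suppFn P u ≤ r :=
  csSup_le (hne.image _) (Set.forall_mem_image.mpr h)

lemma exists_inner_eq_suppFn (hc : IsCompact P) (hne : P.Nonempty)
    (u : EuclideanSpace ℝ (Fin d)) : ∃ x ∈ P, ⟪u, x⟫ = suppFn P u := by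
  obtain ⟨x, hxP, hmax⟩ := hc.exists_isMaxOn hne
    (continuous_const.inner continuous_id).continuousOn (f := fun y => ⟪u, y⟫)
  exact ⟨x, hxP, (inner_le_suppFn hc u hxP).antisymm (suppFn_le hne hmax)⟩

lemma suppFn_zero (hne : P.Nonempty) : suppFn P 0 = 0 := by
  simp [suppFn, hne.image_const]

lemma supportWidth_nonneg (hc : IsCompact P) (hne : P.Nonempty)
    (u : EuclideanSpace ℝ (Fin d)) : 0 ≤ supportWidth P u := by
  obtain ⟨x, hx⟩ := hne
  have := inner_le_suppFn hc u hx
  have := neg_suppFn_neg_le_inner hc u hx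
  unfold supportWidth
  linarith

lemma supportWidth_pos (hc : IsCompact P) (hint : (interior P).Nonempty)
    {u : EuclideanSpace ℝ (Fin d)} (hu : u ≠ 0) : 0 < supportWidth P u := by
  obtain ⟨x, hx⟩ := hint
  obtain ⟨t, ht, hplus, hminus⟩ := exists_pos_add_smul_mem_and_sub_smul_mem hx u
  have h1 := inner_le_suppFn hc u hplus
  have h2 := neg_suppFn_neg_le_inner hc u hminus
  rw [inner_add_right, real_inner_smul_right] at h1
  rw [inner_sub_right, real_inner_smul_right] at h2
  have : 0 < ⟪u, u⟫ := real_inner_self_pos.mpr hu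
  unfold supportWidth
  nlinarith

lemma abs_slabCoord_le_one (hc : IsCompact P) (u : EuclideanSpace ℝ (Fin d))
    {x : EuclideanSpace ℝ (Fin d)} (hx : x ∈ P) : |slabCoord P u x| ≤ 1 := by
  have h1 := inner_le_suppFn hc u hx
  have h2 := neg_suppFn_neg_le_inner hc u hx
  have hw := supportWidth_nonneg hc ⟨x, hx⟩ u
  rw [slabCoord, abs_div, abs_of_nonneg hw]
  exact div_le_one_of_le₀ (abs_le.mpr ⟨by unfold supportWidth; linarith,
    by unfold supportWidth; linarith⟩) hw

lemma inner_le_of_slabCoord_lt (hc : IsCompact P) (hint : (interior P).Nonempty)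
    {u x : EuclideanSpace ℝ (Fin d)} {l : ℝ} (h : slabCoord P u x < 1 + l) :
    ⟪u, x⟫ ≤ suppFn P u + l * supportWidth P u / 2 := by
  rcases eq_or_ne u 0 with rfl | hu
  · simp [supportWidth, suppFn_zero (hint.mono interior_subset)]
  rw [slabCoord, div_lt_iff₀ (supportWidth_pos hc hint hu)] at h
  unfold supportWidth at h ⊢
  linarith

lemma sum_slabCoord_pow_le_card {ι : Type*} [Fintype ι] (hc : IsCompact P)
    (u : ι → EuclideanSpace ℝ (Fin d)) (n : ℕ) {x : EuclideanSpace ℝ (Fin d)} (hx : x ∈ P) :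
    ∑ i, slabCoord P (u i) x ^ (2 * n) ≤ Fintype.card ι := by
  refine (sum_le_card_nsmul univ _ 1 fun i _ => ?_).trans (by simp)
  rw [← (even_two_mul n).pow_abs]
  exact pow_le_one₀ (abs_nonneg _) (abs_slabCoord_le_one hc (u i) hx)

end SupportFunction

section Helly

variable {d : ℕ} {P : Set (EuclideanSpace ℝ (Fin d))} {ι : Type*}

lemma inner_average_add_supportWidth_div_le (hc : IsCompact P)
    {u z : ι → EuclideanSpace ℝ (Fin d)} (hzP : ∀ j, z j ∈ P)
    (hz : ∀ j, ⟪u j, z j⟫ = -suppFn P (-u j)) {I : Finset ι} {i : ι} (hi : i ∈ I) :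
    ⟪u i, ∑ j ∈ I, (#I : ℝ)⁻¹ • z j⟫ + supportWidth P (u i) / #I ≤ suppFn P (u i) := by
  classical
  have hk : (0 : ℝ) < #I := by exact_mod_cast card_pos.mpr ⟨i, hi⟩
  have hrest : ∑ j ∈ I.erase i, ⟪u i, z j⟫ ≤ (#I - 1) * suppFn P (u i) := by
    have := sum_le_card_nsmul _ _ _ fun j (_ : j ∈ I.erase i) => inner_le_suppFn hc (u i) (hzP j)
    rwa [nsmul_eq_mul, card_erase_of_mem hi, Nat.cast_pred (card_pos.mpr ⟨i, hi⟩)] at this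
  have hsum : ⟪u i, ∑ j ∈ I, (#I : ℝ)⁻¹ • z j⟫
      = (#I : ℝ)⁻¹ * (-suppFn P (-u i) + ∑ j ∈ I.erase i, ⟪u i, z j⟫) := by
    simp_rw [inner_sum, real_inner_smul_right, ← mul_sum, ← add_sum_erase _ _ hi, hz i]
  rw [hsum, supportWidth, inv_mul_eq_div, ← add_div, div_le_iff₀ hk]
  linarith

lemma exists_mem_forall_inner_add_supportWidth_div_le [Fintype ι] (hconv : Convex ℝ P)
    (hc : IsCompact P) (hne : P.Nonempty) (u : ι → EuclideanSpace ℝ (Fin d)) :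
    ∃ c ∈ P, ∀ i, ⟪u i, c⟫ + supportWidth P (u i) / (d + 1) ≤ suppFn P (u i) := by
  cases isEmpty_or_nonempty ι
  · exact ⟨hne.some, hne.some_mem, isEmptyElim⟩
  choose z hzP hz using fun i => exists_inner_eq_suppFn hc hne (-u i)
  simp_rw [inner_neg_left, neg_eq_iff_eq_neg] at hz
  let C : ι → Set (EuclideanSpace ℝ (Fin d)) :=
    fun i => P ∩ {x | ⟪u i, x⟫ ≤ suppFn P (u i) - supportWidth P (u i) / (d + 1)}
  have hconvC : ∀ i ∈ (univ : Finset ι), Convex ℝ (C i) := fun i _ =>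
    hconv.inter (convex_halfSpace_le (innerₛₗ ℝ (u i)).isLinear _)
  obtain ⟨c, hcC⟩ := Convex.helly_theorem' hconvC fun I _ hI => by
    rw [finrank_euclideanSpace_fin] at hI
    rcases I.eq_empty_or_nonempty with rfl | ⟨i₀, hi₀⟩
    · simp
    refine ⟨∑ j ∈ I, (#I : ℝ)⁻¹ • z j, Set.mem_iInter₂.mpr fun i hi => ⟨?_, ?_⟩⟩
    · refine hconv.sum_mem (fun _ _ => by positivity) ?_ fun j _ => hzP j
      simp [card_pos.mpr ⟨i₀, hi₀⟩ |>.ne']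
    · refine le_sub_iff_add_le.mpr
        (le_trans ?_ (inner_average_add_supportWidth_div_le hc hzP hz hi))
      gcongr
      · exact supportWidth_nonneg hc hne _
      · exact_mod_cast card_pos.mpr ⟨i, hi⟩
      · exact_mod_cast hI
  simp only [Set.mem_iInter, mem_univ, true_implies] at hcC
  exact ⟨c, (hcC (Classical.arbitrary ι)).1, fun i => le_sub_iff_add_le.mp (hcC i).2⟩

end Helly

section Polytope

variable {d : ℕ} {ι : Type*} [Fintype ι] {a : ι → EuclideanSpace ℝ (Fin d)} {b : ι → ℝ}
  {P : Set (EuclideanSpace ℝ (Fin d))}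

/-- The homothety of ratio `(1 + s)⁻¹`, `s = (d + 1) * l / 2`, centred at the Helly point `c` of
`P` maps `x` into `P`. -/
lemma infDist_le_of_forall_slabCoord_lt (hP : P = {x | ∀ i, ⟪a i, x⟫ ≤ b i}) (hc : IsCompact P)
    (hint : (interior P).Nonempty) {l : ℝ} (hl : 0 ≤ l) {x : EuclideanSpace ℝ (Fin d)}
    (hx : ∀ i, slabCoord P (a i) x < 1 + l) : infDist x P ≤ (d + 1) * l / 2 * diam P := by
  have hne : P.Nonempty := hint.mono interior_subset
  have hconv : Convex ℝ P := by
    rw [hP, Set.ofPred_forall]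
    exact convex_iInter fun i => convex_halfSpace_le (innerₛₗ ℝ (a i)).isLinear _
  have hsupp : ∀ i, suppFn P (a i) ≤ b i := fun i =>
    suppFn_le hne fun y hy => by rw [hP] at hy; exact hy i
  obtain ⟨c, hcP, hdeep⟩ := exists_mem_forall_inner_add_supportWidth_div_le hconv hc hne a
  set s : ℝ := (d + 1) * l / 2
  have hs : 0 ≤ s := by positivity
  refine infDist_le_mul_diam_of_lineMap_mem hc.isBounded hcP hs ?_
  have hstep : ∀ i, ⟪a i, x⟫ - ⟪a i, c⟫ ≤ (1 + s) * (suppFn P (a i) - ⟪a i, c⟫) := fun i => by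
    have hxi := inner_le_of_slabCoord_lt hc hint (hx i)
    have hdepth : s * (supportWidth P (a i) / (d + 1)) ≤ s * (suppFn P (a i) - ⟪a i, c⟫) :=
      mul_le_mul_of_nonneg_left (by linarith [hdeep i]) hs
    have hls : l * supportWidth P (a i) / 2 = s * (supportWidth P (a i) / (d + 1)) := by
      simp only [s]; field_simp
    linarith
  rw [hP]
  intro i
  rw [AffineMap.lineMap_apply_module', inner_add_right, real_inner_smul_right, inner_sub_right]
  have := (inv_mul_le_iff₀ (by positivity : (0 : ℝ) < 1 + s)).mpr (hstep i)
  linarith [hsupp i]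

end Polytope

lemma abs_lt_of_sum_pow_le {ι : Type*} {f : ι → ℝ} {s : Finset ι} {n : ℕ} {M L : ℝ}
    (hsum : ∑ j ∈ s, f j ^ (2 * n) ≤ M) (hML : M < L ^ (2 * n)) (hL : 0 ≤ L) {i : ι}
    (hi : i ∈ s) : |f i| < L := by
  have heven : Even (2 * n) := even_two_mul n
  refine lt_of_pow_lt_pow_left₀ (2 * n) hL ?_
  rw [heven.pow_abs]
  calc f i ^ (2 * n) ≤ ∑ j ∈ s, f j ^ (2 * n) :=
        single_le_sum (fun j _ => heven.pow_nonneg (f j)) hi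
    _ < L ^ (2 * n) := hsum.trans_lt hML

theorem polytope_polynomial_approximation_general (d m : ℕ) (hm : 0 < m)
    (a : Fin m → EuclideanSpace ℝ (Fin d)) (b : Fin m → ℝ)
    (P : Set (EuclideanSpace ℝ (Fin d)))
    (hP : P = {x | ∀ i, (inner ℝ (a i) x : ℝ) ≤ b i})
    (hcomp : IsCompact P) (hfull : (interior P).Nonempty)
    (v : Fin m → EuclideanSpace ℝ (Fin d) → ℝ)
    (hv : ∀ i x, v i x = (2 * (inner ℝ (a i) x : ℝ) - suppFn P (a i) + suppFn P (-a i)) /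
      (suppFn P (a i) + suppFn P (-a i)))
    (ε : ℝ) (hε : 0 < ε) (p : ℕ)
    (hp : Real.log m / (2 * Real.log (1 + 2 * ε / ((d + 1) * Metric.diam P))) < (p : ℝ))
    (K : Set (EuclideanSpace ℝ (Fin d)))
    (hK : K = {x | (∑ i, v i x ^ (2 * p)) / m ≤ 1}) :
    P ⊆ K ∧ Metric.hausdorffDist P K ≤ ε := by
  obtain rfl : v = fun i => slabCoord P (a i) := funext fun i => funext (hv i)
  have hmemK : ∀ x, x ∈ K ↔ ∑ i, slabCoord P (a i) x ^ (2 * p) ≤ m := fun x => by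
    rw [hK, Set.mem_ofPred_eq, div_le_one (Nat.cast_pos.mpr hm)]
  have hPK : P ⊆ K := fun x hx =>
    (hmemK x).mpr (by simpa using sum_slabCoord_pow_le_card hcomp a p hx)
  refine ⟨hPK, ?_⟩
  rcases subsingleton_or_nontrivial (EuclideanSpace ℝ (Fin d)) with _ | _
  · rw [(hfull.mono interior_subset).eq_univ] at hPK ⊢
    rw [Set.univ_subset_iff.mp hPK, hausdorffDist_self_zero]
    exact hε.le
  have hD : 0 < diam P := diam_pos_of_interior_nonempty hcomp.isBounded hfull
  set l := 2 * ε / ((d + 1) * diam P)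
  have hl : 0 < l := by positivity
  have hml : (m : ℝ) < (1 + l) ^ (2 * p) := by
    refine Real.lt_pow_of_log_lt (by positivity) ?_
    have := (div_lt_iff₀ (mul_pos two_pos (Real.log_pos (by linarith)))).mp hp
    push_cast
    linarith
  refine hausdorffDist_le_of_infDist hε.le
    (fun x hx => (infDist_zero_of_mem (hPK hx)).trans_le hε.le) fun x hx => ?_
  calc infDist x P ≤ (d + 1) * l / 2 * diam P :=
        infDist_le_of_forall_slabCoord_lt hP hcomp hfull hl.le fun i =>
          (le_abs_self _).trans_lt <|
            abs_lt_of_sum_pow_le ((hmemK x).mp hx) hml (by positivity) (mem_univ i)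
    _ = ε := by
      simp only [l]
      field_simp

/-- Hammer-type approximation: for a full-dimensional polytope
`P = {x : ⟨aⁱ,x⟩ ≤ bᵢ}` with irredundant representation (`bᵢ = h(aⁱ)`) and
centroid at the origin, with `vᵢ(x) = (2⟨aⁱ,x⟩ - h(aⁱ) + h(-aⁱ))/(h(aⁱ) + h(-aⁱ))`,
`ε > 0`, integer `p > ln m / (2 ln(1 + 2ε/((d+1) diam P)))`,
`p_ε(x) = (1/m) ∑ᵢ vᵢ(x)^{2p}` and `K_ε = {x : p_ε(x) ≤ 1}`, one has `P ⊆ K_ε`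
and `dist(P, K_ε) ≤ ε` in the Hausdorff distance. -/
theorem polytope_polynomial_approximation (d m : ℕ) (hm : 0 < m)
    (a : Fin m → EuclideanSpace ℝ (Fin d)) (b : Fin m → ℝ)
    (P : Set (EuclideanSpace ℝ (Fin d)))
    (hP : P = {x | ∀ i, (inner ℝ (a i) x : ℝ) ≤ b i})
    (hcomp : IsCompact P) (hfull : (interior P).Nonempty)
    (hb : ∀ i, b i = suppFn P (a i))
    (hcent : (∫ x in P, x ∂volume) = 0)
    (v : Fin m → EuclideanSpace ℝ (Fin d) → ℝ)
    (hv : ∀ i x, v i x = (2 * (inner ℝ (a i) x : ℝ) - suppFn P (a i) + suppFn P (-a i)) /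
      (suppFn P (a i) + suppFn P (-a i)))
    (ε : ℝ) (hε : 0 < ε) (p : ℕ)
    (hp : Real.log m / (2 * Real.log (1 + 2 * ε / ((d + 1) * Metric.diam P))) < (p : ℝ))
    (K : Set (EuclideanSpace ℝ (Fin d)))
    (hK : K = {x | (∑ i, v i x ^ (2 * p)) / m ≤ 1}) :
    P ⊆ K ∧ Metric.hausdorffDist P K ≤ ε :=
  polytope_polynomial_approximation_general d m hm a b P hP hcomp hfull v hv ε hε p hp K hK
end
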